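/- arXiv:1810.10738 — 4 statements merged into one kernel-verified Lean document; each statement's English description precedes it below -/
import Mathlib

section
/- In a skip list over n elements where each node independently has a direct parent with probability 1/2, the length of the search path from the top level to any fixed element on the bottom level is O(log n) with high probability: for every constant c > 0 there is a constant d such that the search-path length exceeds d·log n with probability at most n^(-c). -/
open MeasureTheory ProbabilityTheory

/-!
Trace the search path for `t` backwards from its bottom node: it climbs column `t`, then moves
left to the nearest column reaching its current level, climbs that one, and so on. It therefore
visits exactly the *record* columns `a ≤ t` (those at least as high as every column in `(a, t]`)
and climbs in total to the maximum height `M` of the columns `≤ t`, so its length is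
`(M - 1) + #records`.

The probability that some height exceeds `m` is at most `n 2⁻ᵐ`. Scanning leftwards from `t`,
when the running maximum is `v` the next column is a record with probability `2¹⁻ᵛ`, independently
of the columns already scanned; a recursion on the event "at least `s` records, running maximum
`v`" bounds its probability by `(2/3)ˢ 4ᵛ`. For `M ≤ m` and `9m` records this is exponentially
small in `m`, and `m ≈ (c + 1) log₂ n` makes both failure probabilities at most `n⁻ᶜ / 2`.
-/

/-- The length of the (backward) search path from the top level of a skip list to
element `t` on the bottom level, for a skip list over `n` elements with heights `H`.
A node `(j, ℓ)` (with `1 ≤ ℓ ≤ H j`, `j ≤ t`) is visited exactly when no element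
strictly between `j` and `t` reaches level `ℓ + 1`. -/
def searchPathLen (n : ℕ) (H : Fin n → ℕ) (t : Fin n) : ℕ :=
  ∑ j : Fin n,
    ((Finset.Icc 1 (H j)).filter (fun ℓ =>
      j ≤ t ∧ ∀ j' : Fin n, j < j' → j' ≤ t → H j' < ℓ + 1)).card

open Finset

namespace SkipList

theorem downward_induction {t : ℕ} {P : ℕ → Prop} (base : ∀ b, t < b → P b)
    (step : ∀ b ≤ t, P (b + 1) → P b) (b : ℕ) : P b := by
  obtain ⟨k, hk⟩ : ∃ k, t + 1 - b = k := ⟨_, rfl⟩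
  induction k generalizing b with
  | zero => exact base b (by omega)
  | succ k ih => exact step b (by omega) (ih (b + 1) (by omega))

section Records

variable {f g : ℕ → ℕ} {t b : ℕ}

/-- `runMax f t (a + 1)` is the level at which the backward search path for `t` reaches
column `a`. -/
def runMax (f : ℕ → ℕ) (t b : ℕ) : ℕ := max 1 ((Icc b t).sup f)

/-- The records are exactly the columns in `[b, t]` that the search path for `t` passes
through. -/
def numRecords (f : ℕ → ℕ) (t b : ℕ) : ℕ := #{a ∈ Icc b t | runMax f t (a + 1) ≤ f a}

theorem one_le_runMax : 1 ≤ runMax f t b := le_max_left _ _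

theorem runMax_of_lt (h : t < b) : runMax f t b = 1 := by
  simp [runMax, Icc_eq_empty_of_lt h]

theorem runMax_of_le (h : b ≤ t) : runMax f t b = max (f b) (runMax f t (b + 1)) := by
  rw [runMax, runMax, ← insert_Icc_add_one_left_eq_Icc h, sup_insert]
  omega

theorem runMax_le {m : ℕ} (hm : 1 ≤ m) (h : ∀ a, f a ≤ m) : runMax f t b ≤ m :=
  max_le hm (Finset.sup_le fun a _ => h a)

theorem runMax_congr (h : ∀ a, b ≤ a → a ≤ t → f a = g a) : runMax f t b = runMax g t b := by
  rw [runMax, runMax, sup_congr rfl fun a ha => h a (mem_Icc.1 ha).1 (mem_Icc.1 ha).2]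

theorem numRecords_of_lt (h : t < b) : numRecords f t b = 0 := by
  simp [numRecords, Icc_eq_empty_of_lt h]

theorem numRecords_of_le (h : b ≤ t) :
    numRecords f t b = (if runMax f t (b + 1) ≤ f b then 1 else 0) + numRecords f t (b + 1) := by
  rw [numRecords, numRecords, ← insert_Icc_add_one_left_eq_Icc h, filter_insert]
  split_ifs
  · rw [card_insert_of_notMem (by simp), add_comm]
  · rw [zero_add]

theorem numRecords_congr (h : ∀ a, b ≤ a → a ≤ t → f a = g a) :
    numRecords f t b = numRecords g t b := by
  rw [numRecords, numRecords]
  refine congrArg card (filter_congr fun a ha => ?_)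
  obtain ⟨hba, hat⟩ := mem_Icc.1 ha
  rw [h a hba hat, runMax_congr fun x hx hxt => h x (by omega) hxt]

/-- In column `b` the path climbs from the running maximum to its right up to the height of `b`,
entering the column at all only if `b` is a record. -/
theorem card_Icc_runMax_add (h : b ≤ t) :
    #(Icc (runMax f t (b + 1)) (f b)) + runMax f t (b + 1)
      = runMax f t b + (if runMax f t (b + 1) ≤ f b then 1 else 0) := by
  rw [Nat.card_Icc, runMax_of_le h]
  have := one_le_runMax (f := f) (t := t) (b := b + 1)
  split_ifs <;> omega

theorem sum_card_Icc_runMax_add_one (b : ℕ) :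
    ∑ a ∈ Icc b t, #(Icc (runMax f t (a + 1)) (f a)) + 1 = runMax f t b + numRecords f t b := by
  induction b using downward_induction (t := t) with
  | base b hb => simp [Icc_eq_empty_of_lt hb, runMax_of_lt hb, numRecords_of_lt hb]
  | step b hb ih =>
    rw [← insert_Icc_add_one_left_eq_Icc hb, sum_insert (by simp), add_assoc, ih,
      numRecords_of_le hb, ← add_assoc, card_Icc_runMax_add hb]
    ring

theorem numRecords_succ_le_cases {s : ℕ} (hb : b ≤ t) (hs : s + 1 ≤ numRecords f t b) :
    (f b < runMax f t b ∧ s + 1 ≤ numRecords f t (b + 1) ∧ runMax f t (b + 1) = runMax f t b) ∨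
      (f b = runMax f t b ∧ s ≤ numRecords f t (b + 1) ∧ runMax f t (b + 1) ≤ runMax f t b) := by
  rw [numRecords_of_le hb] at hs
  rw [runMax_of_le hb]
  split_ifs at hs <;> omega

end Records

section Heights

variable {n : ℕ}

noncomputable def heightSeq (h : Fin n → ℕ) : ℕ → ℕ := Function.extend Fin.val h 0

theorem heightSeq_of_lt (h : Fin n → ℕ) {a : ℕ} (ha : a < n) : heightSeq h a = h ⟨a, ha⟩ :=
  Fin.val_injective.extend_apply h 0 ⟨a, ha⟩

theorem heightSeq_val (h : Fin n → ℕ) (i : Fin n) : heightSeq h i = h i :=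
  Fin.val_injective.extend_apply h 0 i

theorem heightSeq_le {h : Fin n → ℕ} {m : ℕ} (hm : ∀ i, h i ≤ m) (a : ℕ) : heightSeq h a ≤ m := by
  by_cases ha : a < n
  · exact heightSeq_of_lt h ha ▸ hm _
  · rw [heightSeq, Function.extend_apply' _ _ _ fun ⟨i, hi⟩ => ha (hi ▸ i.isLt)]
    exact Nat.zero_le m

theorem searchPathLen_column_eq_Icc (h : Fin n → ℕ) (t j : Fin n) (hj : j ≤ t) :
    {ℓ ∈ Icc 1 (h j) | j ≤ t ∧ ∀ j' : Fin n, j < j' → j' ≤ t → h j' < ℓ + 1}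
      = Icc (runMax (heightSeq h) t (j + 1)) (h j) := by
  ext ℓ
  have hsup : (Icc (j.val + 1) t).sup (heightSeq h) ≤ ℓ ↔
      ∀ j' : Fin n, j < j' → j' ≤ t → h j' < ℓ + 1 := by
    rw [Finset.sup_le_iff]
    refine ⟨fun H j' hjj' hj't => ?_, fun H a ha => ?_⟩
    · have := H j' (mem_Icc.2 ⟨hjj', hj't⟩)
      rw [heightSeq_val] at this
      omega
    · obtain ⟨hja, hat⟩ := mem_Icc.1 ha
      have han : a < n := hat.trans_lt t.isLt
      have := H ⟨a, han⟩ (Fin.lt_def.2 hja) (Fin.le_def.2 hat)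
      rw [heightSeq_of_lt h han]
      omega
  simp only [mem_filter, mem_Icc, runMax, ← hsup, hj, true_and]
  omega

theorem searchPathLen_eq_sum (h : Fin n → ℕ) (t : Fin n) :
    searchPathLen n h t
      = ∑ a ∈ Icc 0 (t : ℕ), #(Icc (runMax (heightSeq h) t (a + 1)) (heightSeq h a)) := by
  set F : ℕ → ℕ := fun a => if a ≤ t then #(Icc (runMax (heightSeq h) t (a + 1)) (heightSeq h a))
    else 0
  have hcol : ∀ j : Fin n, #{ℓ ∈ Icc 1 (h j) | j ≤ t ∧ ∀ j' : Fin n, j < j' → j' ≤ t → h j' < ℓ + 1}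
      = F j := by
    intro j
    by_cases hj : j ≤ t
    · rw [searchPathLen_column_eq_Icc h t j hj]
      simp [F, heightSeq_val, Fin.le_def.1 hj]
    · simp [F, hj, Fin.le_def.not.1 hj]
  rw [searchPathLen, sum_congr rfl fun j _ => hcol j, Fin.sum_univ_eq_sum_range F, ← sum_filter]
  congr 1
  ext a
  simp only [mem_filter, mem_range, mem_Icc]
  have := t.isLt
  omega

theorem searchPathLen_add_one (h : Fin n → ℕ) (t : Fin n) :
    searchPathLen n h t + 1 = runMax (heightSeq h) t 0 + numRecords (heightSeq h) t 0 := by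
  rw [searchPathLen_eq_sum, sum_card_Icc_runMax_add_one]

theorem exists_lt_or_le_numRecords_of_le_searchPathLen {h : Fin n → ℕ} {t : Fin n} {m : ℕ}
    (hm : 0 < m) (hlen : 10 * m ≤ searchPathLen n h t) :
    (∃ i, m < h i) ∨
      9 * m ≤ numRecords (heightSeq h) t 0 ∧ runMax (heightSeq h) t 0 ≤ m := by
  by_cases hmax : ∃ i, m < h i
  · exact Or.inl hmax
  simp only [not_exists, not_lt] at hmax
  have hrun := runMax_le (t := t) (b := 0) hm (heightSeq_le hmax)
  have := searchPathLen_add_one h t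
  exact Or.inr ⟨by omega, hrun⟩

end Heights

section Independence

variable {Ω ι β : Type*} [MeasurableSpace Ω] {μ : Measure Ω}
  [MeasurableSpace β] [MeasurableSingletonClass β] [Countable β]

theorem measure_inter_eq_mul_of_iIndepFun {X : ι → Ω → β} (hX : ∀ i, Measurable (X i))
    (hind : iIndepFun X μ) {S T : Finset ι} (hST : Disjoint S T) {A B : Set Ω}
    (hA : ∀ ω ω', (∀ i ∈ S, X i ω = X i ω') → ω ∈ A → ω' ∈ A)
    (hB : ∀ ω ω', (∀ i ∈ T, X i ω = X i ω') → ω ∈ B → ω' ∈ B) :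
    μ (A ∩ B) = μ A * μ B := by
  have preimage_image {U : Finset ι} {E : Set Ω}
      (hE : ∀ ω ω', (∀ i ∈ U, X i ω = X i ω') → ω ∈ E → ω' ∈ E) :
      (fun ω (i : U) => X i ω) ⁻¹' ((fun ω (i : U) => X i ω) '' E) = E := by
    refine subset_antisymm ?_ (Set.subset_preimage_image _ _)
    rintro ω' ⟨ω, hω, heq⟩
    exact hE ω ω' (fun i hi => congrFun heq ⟨i, hi⟩) hω
  rw [← preimage_image hA, ← preimage_image hB]
  exact (hind.indepFun_finset S T hST hX).measure_inter_preimage_eq_mul _ _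
    (Set.to_countable _).measurableSet (Set.to_countable _).measurableSet

end Independence

section GeometricTail

variable {Ω : Type*} [MeasurableSpace Ω] {μ : Measure Ω} [IsProbabilityMeasure μ]
  {X : Ω → ℕ} {v : ℕ}

theorem measureReal_eq_of_tail (hX : Measurable X)
    (htail : ∀ ℓ, 1 ≤ ℓ → μ.real {ω | ℓ ≤ X ω} = (1 / 2 : ℝ) ^ (ℓ - 1)) (hv : 1 ≤ v) :
    μ.real {ω | X ω = v} = (1 / 2 : ℝ) ^ v := by
  have hdiff : {ω | X ω = v} = {ω | v ≤ X ω} \ {ω | v + 1 ≤ X ω} := by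
    ext ω
    simp
    omega
  rw [hdiff, measureReal_sdiff (Set.ofPred_subset_ofPred.2 fun ω h => by omega)
    (measurableSet_le measurable_const hX), htail v hv, htail (v + 1) (by omega), Nat.add_sub_cancel,
    ← Nat.sub_add_cancel hv, pow_succ, Nat.add_sub_cancel]
  ring

theorem measureReal_lt_of_tail (hX : Measurable X)
    (htail : ∀ ℓ, 1 ≤ ℓ → μ.real {ω | ℓ ≤ X ω} = (1 / 2 : ℝ) ^ (ℓ - 1)) (hv : 1 ≤ v) :
    μ.real {ω | X ω < v} = 1 - 2 * (1 / 2 : ℝ) ^ v := by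
  have hcompl : {ω | X ω < v} = {ω | v ≤ X ω}ᶜ := by
    ext ω
    simp
  rw [hcompl, measureReal_compl (measurableSet_le measurable_const hX), probReal_univ, htail v hv,
    ← Nat.sub_add_cancel hv, pow_succ, Nat.add_sub_cancel]
  ring

end GeometricTail

theorem sum_Icc_one_four_pow_le (m : ℕ) : ∑ v ∈ Icc 1 m, (4 : ℝ) ^ v ≤ 4 / 3 * 4 ^ m := by
  induction m with
  | zero => norm_num
  | succ m ih =>
    rw [sum_Icc_succ_top (by omega), pow_succ]
    linarith

section RecordEvent

variable {n : ℕ} {Ω : Type*} {H : Fin n → Ω → ℕ} {t : Fin n}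

def recordEvent (H : Fin n → Ω → ℕ) (t b s v : ℕ) : Set Ω :=
  {ω | s ≤ numRecords (heightSeq (H · ω)) t b ∧ runMax (heightSeq (H · ω)) t b = v}

theorem recordEvent_succ_subset {b s v : ℕ} (hbt : b ≤ t) :
    recordEvent H t b (s + 1) v ⊆
      ({ω | H ⟨b, hbt.trans_lt t.isLt⟩ ω < v} ∩ recordEvent H t (b + 1) (s + 1) v) ∪
        ⋃ w ∈ Icc 1 v, {ω | H ⟨b, hbt.trans_lt t.isLt⟩ ω = v} ∩ recordEvent H t (b + 1) s w := by
  rintro ω ⟨hs, rfl⟩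
  have hb := heightSeq_of_lt (H · ω) (hbt.trans_lt t.isLt)
  rcases numRecords_succ_le_cases hbt hs with ⟨hlt, hs', hrun⟩ | ⟨heq, hs', hrun⟩
  · exact Or.inl ⟨by simpa [hb] using hlt, hs', hrun⟩
  · exact Or.inr (Set.mem_biUnion (x := runMax (heightSeq (H · ω)) t (b + 1))
      (mem_Icc.2 ⟨one_le_runMax, hrun⟩) ⟨by simpa [hb] using heq, hs', rfl⟩)

variable [MeasurableSpace Ω] {μ : Measure Ω}

theorem measureReal_inter_recordEvent (hmeas : ∀ i, Measurable (H i)) (hind : iIndepFun H μ)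
    {b : ℕ} (hb : b < n) (P : ℕ → Prop) (s v : ℕ) :
    μ.real ({ω | P (H ⟨b, hb⟩ ω)} ∩ recordEvent H t (b + 1) s v)
      = μ.real {ω | P (H ⟨b, hb⟩ ω)} * μ.real (recordEvent H t (b + 1) s v) := by
  classical
  have hdet : ∀ ω ω', (∀ i ∈ ({i | b < i.val} : Finset (Fin n)), H i ω = H i ω') →
      ∀ a, b + 1 ≤ a → a ≤ t → heightSeq (H · ω) a = heightSeq (H · ω') a := by
    intro ω ω' heq a hba hat
    have han : a < n := hat.trans_lt t.isLt
    rw [heightSeq_of_lt _ han, heightSeq_of_lt _ han]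
    exact heq _ (by simp; omega)
  rw [Measure.real, Measure.real, Measure.real, ← ENNReal.toReal_mul]
  congr 1
  refine measure_inter_eq_mul_of_iIndepFun hmeas hind (S := {⟨b, hb⟩}) (T := {i | b < i.val})
    (by simp) (fun ω ω' heq => by simp [heq ⟨b, hb⟩ (mem_singleton_self _)])
    fun ω ω' heq => ?_
  simp only [recordEvent, Set.mem_ofPred_eq, numRecords_congr (hdet ω ω' heq),
    runMax_congr (hdet ω ω' heq), imp_self]

variable [IsProbabilityMeasure μ]

theorem measureReal_recordEvent_succ_le (hmeas : ∀ i, Measurable (H i)) (hind : iIndepFun H μ)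
    (htail : ∀ i ℓ, 1 ≤ ℓ → μ.real {ω | ℓ ≤ H i ω} = (1 / 2 : ℝ) ^ (ℓ - 1))
    {b s v : ℕ} (hb : b ≤ t) (hv : 1 ≤ v)
    (ih : ∀ s w, 1 ≤ w → μ.real (recordEvent H t (b + 1) s w) ≤ (2 / 3 : ℝ) ^ s * 4 ^ w) :
    μ.real (recordEvent H t b (s + 1) v) ≤ (2 / 3 : ℝ) ^ (s + 1) * 4 ^ v := by
  have hbn : b < n := hb.trans_lt t.isLt
  set p : ℝ := (1 / 2) ^ v
  calc μ.real (recordEvent H t b (s + 1) v)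
      ≤ μ.real {ω | H ⟨b, hbn⟩ ω < v} * μ.real (recordEvent H t (b + 1) (s + 1) v)
        + ∑ w ∈ Icc 1 v,
            μ.real {ω | H ⟨b, hbn⟩ ω = v} * μ.real (recordEvent H t (b + 1) s w) := by
        rw [← measureReal_inter_recordEvent hmeas hind hbn (· < v)]
        simp only [← measureReal_inter_recordEvent hmeas hind hbn (· = v)]
        exact (measureReal_mono (recordEvent_succ_subset hb)).trans
          ((measureReal_union_le _ _).trans
            (add_le_add_right (measureReal_biUnion_finset_le _ _) _))
    _ ≤ μ.real {ω | H ⟨b, hbn⟩ ω < v} * ((2 / 3) ^ (s + 1) * 4 ^ v)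
        + ∑ w ∈ Icc 1 v, μ.real {ω | H ⟨b, hbn⟩ ω = v} * ((2 / 3) ^ s * 4 ^ w) := by
        gcongr with w hw
        · exact ih (s + 1) v hv
        · exact ih s w (mem_Icc.1 hw).1
    _ = (1 - 2 * p) * ((2 / 3) ^ (s + 1) * 4 ^ v) + p * ((2 / 3) ^ s * ∑ w ∈ Icc 1 v, 4 ^ w) := by
        rw [measureReal_lt_of_tail (hmeas _) (htail _) hv,
          measureReal_eq_of_tail (hmeas _) (htail _) hv, mul_sum, mul_sum]
    _ ≤ (1 - 2 * p) * ((2 / 3) ^ (s + 1) * 4 ^ v) + p * ((2 / 3) ^ s * (4 / 3 * 4 ^ v)) := by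
        gcongr
        exact sum_Icc_one_four_pow_le v
    _ = (2 / 3) ^ (s + 1) * 4 ^ v := by ring

/-- Each record costs a factor `2 / 3`; the factor `4 ^ v` pays for the records at which the
running maximum rises. -/
theorem measureReal_recordEvent_le (hmeas : ∀ i, Measurable (H i)) (hind : iIndepFun H μ)
    (htail : ∀ i ℓ, 1 ≤ ℓ → μ.real {ω | ℓ ≤ H i ω} = (1 / 2 : ℝ) ^ (ℓ - 1))
    (b s : ℕ) {v : ℕ} (hv : 1 ≤ v) :
    μ.real (recordEvent H t b s v) ≤ (2 / 3 : ℝ) ^ s * 4 ^ v := by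
  induction b using downward_induction (t := t) generalizing s v with
  | base b hb =>
    rcases s with _ | s
    · simpa using measureReal_le_one.trans (one_le_pow₀ (by norm_num : (1 : ℝ) ≤ 4))
    have hempty : recordEvent H t b (s + 1) v = ∅ :=
      Set.eq_empty_of_forall_notMem fun ω hω => by simpa [numRecords_of_lt hb] using hω.1
    rw [hempty, measureReal_empty]
    positivity
  | step b hb ih =>
    rcases s with _ | s
    · simpa using measureReal_le_one.trans (one_le_pow₀ (by norm_num : (1 : ℝ) ≤ 4))
    exact measureReal_recordEvent_succ_le hmeas hind htail hb hv fun s w hw => ih s hw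

end RecordEvent

theorem two_thirds_pow_mul_le_half_pow {m : ℕ} (hm : 0 < m) :
    (2 / 3 : ℝ) ^ (9 * m) * (4 / 3 * 4 ^ m) ≤ (1 / 2) ^ m := by
  have h8 : (2 / 3 : ℝ) ^ (9 * m) * 4 ^ m ≤ (1 / 4) ^ m * (1 / 2) ^ m := by
    rw [pow_mul, ← mul_pow, ← mul_pow]
    exact pow_le_pow_left₀ (by positivity) (by norm_num) m
  have h4 : (1 / 4 : ℝ) ^ m ≤ 1 / 4 := pow_le_of_le_one (by norm_num) (by norm_num) hm.ne'
  have h2 : (0 : ℝ) ≤ (1 / 2) ^ m := by positivity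
  nlinarith

theorem measureReal_ten_mul_le_searchPathLen_le {n : ℕ} {Ω : Type*} [MeasurableSpace Ω]
    {μ : Measure Ω} [IsProbabilityMeasure μ] {H : Fin n → Ω → ℕ} (hmeas : ∀ i, Measurable (H i))
    (hind : iIndepFun H μ)
    (htail : ∀ i ℓ, 1 ≤ ℓ → μ.real {ω | ℓ ≤ H i ω} = (1 / 2 : ℝ) ^ (ℓ - 1))
    (t : Fin n) {m : ℕ} (hm : 0 < m) :
    μ.real {ω | 10 * m ≤ searchPathLen n (H · ω) t} ≤ 2 * n * (1 / 2 : ℝ) ^ m := by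
  have hsub : {ω | 10 * m ≤ searchPathLen n (H · ω) t} ⊆
      (⋃ i, {ω | m + 1 ≤ H i ω}) ∪ ⋃ v ∈ Icc 1 m, recordEvent H t 0 (9 * m) v := by
    intro ω hω
    rcases exists_lt_or_le_numRecords_of_le_searchPathLen hm hω with ⟨i, hi⟩ | ⟨hs, hrun⟩
    · exact Or.inl (Set.mem_iUnion.2 ⟨i, hi⟩)
    · exact Or.inr (Set.mem_biUnion (mem_Icc.2 ⟨one_le_runMax, hrun⟩) ⟨hs, rfl⟩)
  have hn : (1 : ℝ) ≤ n := by exact_mod_cast t.pos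
  have hheight : ∀ i, μ.real {ω | m + 1 ≤ H i ω} = (1 / 2) ^ m := fun i => by
    rw [htail i (m + 1) (by omega), Nat.add_sub_cancel]
  calc μ.real {ω | 10 * m ≤ searchPathLen n (H · ω) t}
      ≤ ∑ i, μ.real {ω | m + 1 ≤ H i ω} + ∑ v ∈ Icc 1 m, μ.real (recordEvent H t 0 (9 * m) v) :=
        (measureReal_mono hsub).trans ((measureReal_union_le _ _).trans
          (add_le_add (measureReal_iUnion_fintype_le _) (measureReal_biUnion_finset_le _ _)))
    _ = n * (1 / 2) ^ m + ∑ v ∈ Icc 1 m, μ.real (recordEvent H t 0 (9 * m) v) := by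
        simp only [hheight, sum_const, card_univ, Fintype.card_fin, nsmul_eq_mul]
    _ ≤ n * (1 / 2) ^ m + (2 / 3) ^ (9 * m) * ∑ v ∈ Icc 1 m, 4 ^ v := by
        rw [mul_sum]
        gcongr with v hv
        exact measureReal_recordEvent_le hmeas hind htail 0 (9 * m) (mem_Icc.1 hv).1
    _ ≤ n * (1 / 2) ^ m + (1 / 2) ^ m := by
        gcongr
        exact (mul_le_mul_of_nonneg_left (sum_Icc_one_four_pow_le m) (by positivity)).trans
          (two_thirds_pow_mul_le_half_pow hm)
    _ ≤ 2 * n * (1 / 2) ^ m := by nlinarith [pow_pos (by norm_num : (0 : ℝ) < 1 / 2) m]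

theorem exists_nat_le_logb_and_two_mul_half_pow_le {c : ℝ} (hc : 0 < c) {n : ℕ} (hn : 2 ≤ n) :
    ∃ m : ℕ, 0 < m ∧ (m : ℝ) ≤ (c + 3) * Real.logb 2 n ∧
      2 * n * (1 / 2 : ℝ) ^ m ≤ (n : ℝ) ^ (-c) := by
  have hn0 : (0 : ℝ) < n := by positivity
  have hlogb : 1 ≤ Real.logb 2 n := by
    rw [Real.le_logb_iff_rpow_le one_lt_two hn0, Real.rpow_one]
    exact_mod_cast hn
  set x := (c + 1) * Real.logb 2 n with hx_def
  have hx : 0 ≤ x := by positivity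
  refine ⟨⌈x⌉₊ + 1, Nat.succ_pos _, ?_, ?_⟩
  · have := Nat.ceil_lt_add_one hx
    push_cast
    nlinarith
  · have hpow : 2 * (n : ℝ) ^ (c + 1) ≤ 2 ^ (⌈x⌉₊ + 1) := by
      calc 2 * (n : ℝ) ^ (c + 1) = 2 ^ (x + 1) := by
            rw [hx_def, Real.rpow_add two_pos, Real.rpow_one, mul_comm (c + 1),
              Real.rpow_mul zero_le_two, Real.rpow_logb two_pos (by norm_num) hn0, mul_comm]
        _ ≤ 2 ^ ((⌈x⌉₊ + 1 : ℕ) : ℝ) := by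
            gcongr
            · norm_num
            · push_cast
              linarith [Nat.le_ceil x]
        _ = 2 ^ (⌈x⌉₊ + 1) := Real.rpow_natCast 2 _
    calc 2 * n * (1 / 2 : ℝ) ^ (⌈x⌉₊ + 1) = 2 * n / 2 ^ (⌈x⌉₊ + 1) := by
          rw [one_div_pow, mul_one_div]
      _ ≤ 2 * n / (2 * (n : ℝ) ^ (c + 1)) := by gcongr
      _ = (n : ℝ) ^ (-c) := by
          rw [Real.rpow_add hn0, Real.rpow_one, Real.rpow_neg hn0.le]
          field_simp

end SkipList

/-- In a skip list over `n` elements with i.i.d. `Geometric(1/2)` heights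
(each node has a direct parent with probability `1/2`), the search path to any fixed
element has length `O(log n)` w.h.p.: for every `c > 0` there is `d > 0` such that the
search-path length exceeds `d·log n` with probability at most `n^(-c)`. -/
theorem searchPath_length_whp :
    ∀ c : ℝ, 0 < c → ∃ d : ℝ, 0 < d ∧
      ∀ (n : ℕ), 2 ≤ n →
      ∀ (Ω : Type) [MeasurableSpace Ω] (μ : Measure Ω) [IsProbabilityMeasure μ]
        (H : Fin n → Ω → ℕ),
        (∀ i, Measurable (H i)) →
        iIndepFun H μ →
        (∀ i (ℓ : ℕ), 1 ≤ ℓ → (μ {ω | ℓ ≤ H i ω}).toReal = (1 / 2 : ℝ) ^ (ℓ - 1)) →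
        ∀ t : Fin n,
          (μ {ω | d * Real.log n < (searchPathLen n (fun i => H i ω) t : ℝ)}).toReal
            ≤ (n : ℝ) ^ (-c) := by
  intro c hc
  refine ⟨10 * (c + 3) / Real.log 2, by positivity, ?_⟩
  intro n hn Ω _ μ _ H hmeas hindep htail t
  obtain ⟨m, hm, hmlog, hmprob⟩ := SkipList.exists_nat_le_logb_and_two_mul_half_pow_le hc hn
  have hthreshold : (10 * m : ℝ) ≤ 10 * (c + 3) / Real.log 2 * Real.log n := by
    have hd : 10 * (c + 3) / Real.log 2 * Real.log n = 10 * ((c + 3) * Real.logb 2 n) := by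
      rw [Real.logb]
      ring
    linarith
  calc μ.real {ω | 10 * (c + 3) / Real.log 2 * Real.log n < (searchPathLen n (H · ω) t : ℝ)}
      ≤ μ.real {ω | 10 * m ≤ searchPathLen n (H · ω) t} :=
        measureReal_mono fun ω hω => by exact_mod_cast (hthreshold.trans_lt hω).le
    _ ≤ 2 * n * (1 / 2) ^ m :=
        SkipList.measureReal_ten_mul_le_searchPathLen_le hmeas hindep htail t hm
    _ ≤ (n : ℝ) ^ (-c) := hmprob
end

section
/- Let T be a tree, and fix an Euler tour of the transformed directed multigraph (edges doubled, loops added). For any edge {u,v} of T, the arcs of the tour strictly between the occurrence of (u,v) and the occurrence of (v,u) are exactly the arcs with both endpoints in the component of T - {u,v} containing v. In particular, the subtree of v relative to parent u appears as a contiguous segment of the Euler tour. -/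
/-! Since `{u,v}` is a bridge of the tree, the only arcs joining the component `C` of `v` in
`T - {u,v}` to the rest of the graph are `(u,v)` and `(v,u)`, and the tour uses each of them
once. A tour starting with `(u,v)` therefore enters `C` at once, stays in `C` until it takes
`(v,u)`, and never comes back. -/

/-- `l` is an Euler tour of the arc multiset `arcs`: a nonempty closed walk using each
arc exactly once, where consecutive arcs chain (head of one arc = tail of the next)
and the tour closes up cyclically. -/
def IsEulerTour {V : Type*} (arcs : Multiset (V × V)) (l : List (V × V)) : Prop :=
  l ≠ [] ∧ (↑l : Multiset (V × V)) = arcs ∧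
    List.Chain' (fun a b => a.2 = b.1) l ∧
    ∀ h : l ≠ [], (l.getLast h).2 = (l.head h).1

/-- The arc multiset of the Euler-tour transformation of a graph `G`: each undirected
edge `{u,v}` is replaced by the two directed arcs `(u,v)`, `(v,u)`, and a self-loop
`(v,v)` is added at every vertex. -/
def treeArcs {V : Type*} [Fintype V] [DecidableEq V] (G : SimpleGraph V)
    [DecidableRel G.Adj] : Multiset (V × V) :=
  (Finset.univ.filter (fun a : V × V => G.Adj a.1 a.2)).val
    + Finset.univ.val.map (fun v : V => (v, v))

namespace List

variable {V : Type*} {l : List (V × V)} {S : Set V} {j : ℕ}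

/-- `l` is a walk that crosses into `S` only at position `0` and out of `S` only at
position `j`. -/
theorem fst_getElem_mem_iff_of_crossings (hl : l.IsChain (fun a b => a.2 = b.1))
    (hj : j < l.length) (hpos : 0 < l.length) (henter : l[0].1 ∉ S ∧ l[0].2 ∈ S)
    (hexit : l[j].2 ∉ S)
    (hstay : ∀ k (hk : k < l.length), k ≠ 0 → k ≠ j → (l[k].1 ∈ S ↔ l[k].2 ∈ S)) :
    ∀ k (hk : k < l.length), l[k].1 ∈ S ↔ 0 < k ∧ k ≤ j := by
  have hj0 : j ≠ 0 := by
    rintro rfl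
    exact hexit henter.2
  intro k
  induction k with
  | zero => simpa using fun _ => henter.1
  | succ k ih =>
    intro hk
    rw [← hl.getElem k hk]
    rcases eq_or_ne k 0 with rfl | hk0
    · simpa [henter.2] using Nat.one_le_iff_ne_zero.2 hj0
    rcases eq_or_ne k j with rfl | hkj
    · simpa using hexit
    rw [← hstay k _ hk0 hkj, ih]
    omega

theorem getElem_mem_iff_of_crossings (hl : l.IsChain (fun a b => a.2 = b.1))
    (hj : j < l.length) (hpos : 0 < l.length) (henter : l[0].1 ∉ S ∧ l[0].2 ∈ S)
    (hexit : l[j].2 ∉ S)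
    (hstay : ∀ k (hk : k < l.length), k ≠ 0 → k ≠ j → (l[k].1 ∈ S ↔ l[k].2 ∈ S))
    (k : ℕ) (hk : k < l.length) : (l[k].1 ∈ S ∧ l[k].2 ∈ S) ↔ 0 < k ∧ k < j := by
  have hfst := fst_getElem_mem_iff_of_crossings hl hj hpos henter hexit hstay
  constructor
  · rintro ⟨h1, h2⟩
    obtain ⟨hk0, hkj⟩ := (hfst k hk).1 h1
    refine ⟨hk0, hkj.lt_of_ne ?_⟩
    rintro rfl
    exact hexit h2
  · rintro ⟨hk0, hkj⟩
    have hk1 : k + 1 < l.length := by omega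
    rw [hl.getElem k hk1, hfst k hk, hfst (k + 1) hk1]
    omega

end List

section TreeArcs

variable {V : Type*} [Fintype V] [DecidableEq V] (G : SimpleGraph V) [DecidableRel G.Adj]

theorem mem_treeArcs {a : V × V} : a ∈ treeArcs G ↔ G.Adj a.1 a.2 ∨ a.1 = a.2 := by
  rcases a with ⟨x, y⟩
  simp [treeArcs, eq_comm]

theorem nodup_treeArcs : (treeArcs G).Nodup := by
  refine Multiset.nodup_add.2 ⟨Finset.nodup _, Multiset.Nodup.map ?_ Finset.univ.nodup, ?_⟩
  · exact fun x y h => congrArg Prod.fst h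
  · rw [Multiset.disjoint_left]
    intro a ha hdiag
    obtain ⟨x, -, rfl⟩ := Multiset.mem_map.1 hdiag
    exact G.irrefl (Finset.mem_filter.1 ha).2

variable {G}

theorem reachable_deleteEdges_fst_iff_snd {s : Set (Sym2 V)} {a : V × V} (ha : a ∈ treeArcs G)
    (hs : s(a.1, a.2) ∉ s) (w : V) :
    (G.deleteEdges s).Reachable w a.1 ↔ (G.deleteEdges s).Reachable w a.2 := by
  rcases (mem_treeArcs G).1 ha with hadj | heq
  · have hadj' : (G.deleteEdges s).Adj a.1 a.2 := (SimpleGraph.deleteEdges_adj ..).2 ⟨hadj, hs⟩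
    exact ⟨fun h => h.trans hadj'.reachable, fun h => h.trans hadj'.symm.reachable⟩
  · rw [heq]

end TreeArcs

/-- Let `T` be a tree with an Euler tour `l` of the transformed multigraph,
rotated to start at the arc `(u,v)` for an edge `{u,v}` of `T`, and let `j` be the
position of the arc `(v,u)`. Then the arcs strictly between `(u,v)` and `(v,u)` (i.e. at
positions `k` with `0 < k < j`) are exactly the arcs with both endpoints in the
component of `T - {u,v}` containing `v`; in particular the subtree of `v` relative to
parent `u` appears as a contiguous segment of the tour. -/
theorem subtree_is_contiguous_segment
    {V : Type*} [Fintype V] [DecidableEq V] (G : SimpleGraph V)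
    [DecidableRel G.Adj] (hT : G.IsTree) (u v : V) (huv : G.Adj u v)
    (l : List (V × V)) (hl : IsEulerTour (treeArcs G) l)
    (hpos : 0 < l.length) (h0 : l.get ⟨0, hpos⟩ = (u, v))
    (j : ℕ) (hj : j < l.length) (hjv : l.get ⟨j, hj⟩ = (v, u)) :
    ∀ (k : ℕ) (hk : k < l.length),
      (0 < k ∧ k < j) ↔
        ((G.deleteEdges {s(u, v)}).Reachable v (l.get ⟨k, hk⟩).1 ∧
         (G.deleteEdges {s(u, v)}).Reachable v (l.get ⟨k, hk⟩).2) := by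
  obtain ⟨-, hperm, hchain, -⟩ := hl
  simp only [List.get_eq_getElem] at h0 hjv ⊢
  have hbridge : ¬(G.deleteEdges {s(u, v)}).Reachable v u := fun h =>
    SimpleGraph.isBridge_iff.1
      (SimpleGraph.isAcyclic_iff_forall_adj_isBridge.1 hT.isAcyclic huv) h.symm
  have hnodup : l.Nodup := by
    rw [← Multiset.coe_nodup, hperm]
    exact nodup_treeArcs G
  have hstay : ∀ k (hk : k < l.length), k ≠ 0 → k ≠ j →
      ((G.deleteEdges {s(u, v)}).Reachable v l[k].1 ↔
        (G.deleteEdges {s(u, v)}).Reachable v l[k].2) := by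
    intro k hk hk0 hkj
    refine reachable_deleteEdges_fst_iff_snd (hperm ▸ l.getElem_mem hk) ?_ v
    rw [Set.mem_singleton_iff, Sym2.eq_iff]
    rintro (⟨h1, h2⟩ | ⟨h1, h2⟩)
    · exact hk0 (hnodup.getElem_inj_iff.1 ((Prod.ext h1 h2 : l[k] = (u, v)).trans h0.symm))
    · exact hkj (hnodup.getElem_inj_iff.1 ((Prod.ext h1 h2 : l[k] = (v, u)).trans hjv.symm))
  intro k hk
  exact (List.getElem_mem_iff_of_crossings (S := {x | (G.deleteEdges {s(u, v)}).Reachable v x})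
    hchain hj hpos (by simpa [h0] using hbridge) (by simpa [hjv] using hbridge) hstay k hk).symm
end

section
/- Let F be a forest on vertex set V and let e = {u,v} be an edge such that F + e is still a forest (u and v are in different trees). Given Euler tours C_u and C_v of the transformed components containing u and v, splitting C_u after a node representing u, splitting C_v after a node representing v, and concatenating: (tour-from-u) ++ [(u,v)] ++ (tour-from-v rotated to start after v) ++ [(v,u)] yields an Euler tour of the transformed component of F + e containing u and v. -/
/-- The arcs of the transformed multigraph lying in the connected component of `w`. -/
def componentArcs {V : Type*} [Fintype V] [DecidableEq V] (G : SimpleGraph V)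
    [DecidableRel G.Adj] [DecidableRel G.Reachable] (w : V) : Multiset (V × V) :=
  (treeArcs G).filter (fun a => G.Reachable w a.1)

namespace SimpleGraph

variable {V : Type*} {G : SimpleGraph V} {u v : V}

theorem reachable_sup_edge_iff {x y : V} :
    (G ⊔ edge u v).Reachable x y ↔
      G.Reachable x y ∨ G.Reachable x u ∧ G.Reachable v y ∨
        G.Reachable x v ∧ G.Reachable u y := by
  constructor
  · rintro ⟨w⟩
    induction w with
    | nil => exact .inl .rfl
    | @cons a b c hab _ ih =>
      rcases hab with hab | hab
      · exact ih.imp hab.reachable.trans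
          (Or.imp (And.imp_left hab.reachable.trans) (And.imp_left hab.reachable.trans))
      · obtain ⟨⟨rfl, rfl⟩ | ⟨rfl, rfl⟩, -⟩ := (edge_adj ..).mp hab <;>
          grind [Reachable.refl]
  · have hle : G ≤ G ⊔ edge u v := le_sup_left
    have huv : (G ⊔ edge u v).Reachable u v := by
      rcases eq_or_ne u v with rfl | hne
      · rfl
      · exact Adj.reachable (.inr ((edge_adj ..).mpr ⟨.inl ⟨rfl, rfl⟩, hne⟩))
    rintro (h | ⟨h₁, h₂⟩ | ⟨h₁, h₂⟩)
    · exact h.mono hle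
    · exact (h₁.mono hle).trans (huv.trans (h₂.mono hle))
    · exact (h₁.mono hle).trans (huv.symm.trans (h₂.mono hle))

theorem reachable_sup_edge_iff_of_not_reachable (hsep : ¬G.Reachable u v) {x : V} :
    (G ⊔ edge u v).Reachable u x ↔ G.Reachable u x ∨ G.Reachable v x := by
  grind [reachable_sup_edge_iff, Reachable.refl]

end SimpleGraph

open SimpleGraph

section Arcs

variable {V : Type*} [Fintype V] [DecidableEq V] {G : SimpleGraph V} [DecidableRel G.Adj]
  {u v : V}

theorem treeArcs_sup_edge [DecidableRel (G ⊔ edge u v).Adj] (hne : u ≠ v)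
    (hnadj : ¬G.Adj u v) :
    treeArcs (G ⊔ edge u v) = (u, v) ::ₘ (v, u) ::ₘ treeArcs G := by
  have hvu : (v, u) ∉ Finset.univ.filter (fun a : V × V => G.Adj a.1 a.2) := by
    simpa using fun h => hnadj h.symm
  have hadj : Finset.univ.filter (fun a : V × V => (G ⊔ edge u v).Adj a.1 a.2) =
      insert (u, v) (insert (v, u) (Finset.univ.filter fun a : V × V => G.Adj a.1 a.2)) := by
    ext ⟨a, b⟩
    simp only [Finset.mem_filter, Finset.mem_univ, true_and, Finset.mem_insert, Prod.mk.injEq,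
      sup_adj, edge_adj]
    grind
  rw [treeArcs, treeArcs, hadj, Finset.insert_val_of_notMem (by simp [hne, hnadj]),
    Finset.insert_val_of_notMem hvu, Multiset.cons_add, Multiset.cons_add]

theorem componentArcs_sup_edge [DecidableRel G.Reachable] [DecidableRel (G ⊔ edge u v).Adj]
    [DecidableRel (G ⊔ edge u v).Reachable] (hsep : ¬G.Reachable u v) :
    componentArcs (G ⊔ edge u v) u =
      (u, v) ::ₘ (v, u) ::ₘ (componentArcs G u + componentArcs G v) := by
  have hne : u ≠ v := fun h => hsep (h ▸ .rfl)
  have hnadj : ¬G.Adj u v := fun h => hsep h.reachable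
  have hdisj : (treeArcs G).filter (fun a => G.Reachable u a.1 ∧ G.Reachable v a.1) = 0 :=
    Multiset.filter_eq_nil.2 fun a _ h => hsep (h.1.trans h.2.symm)
  rw [componentArcs, componentArcs, componentArcs, treeArcs_sup_edge hne hnadj,
    Multiset.filter_add_filter, hdisj, add_zero]
  simp only [reachable_sup_edge_iff_of_not_reachable hsep]
  rw [Multiset.filter_cons_of_pos _ (.inl .rfl), Multiset.filter_cons_of_pos _ (.inr .rfl)]

end Arcs

theorem IsEulerTour.link {V : Type*} {s t : Multiset (V × V)} {A B : List (V × V)} {u v : V}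
    (hA : IsEulerTour s A) (hB : IsEulerTour t B)
    (hAu : ∀ h : A ≠ [], (A.getLast h).2 = u) (hBv : ∀ h : B ≠ [], (B.head h).1 = v) :
    IsEulerTour ((u, v) ::ₘ (v, u) ::ₘ (s + t)) (A ++ (u, v) :: (B ++ [(v, u)])) := by
  obtain ⟨hA0, rfl, hAc, hAcl⟩ := hA
  obtain ⟨hB0, rfl, hBc, hBcl⟩ := hB
  refine ⟨by simp, ?_, ?_, fun _ => ?_⟩
  · have hperm : (A ++ (u, v) :: (B ++ [(v, u)])).Perm ((u, v) :: (v, u) :: (A ++ B)) :=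
      List.perm_middle.trans
        (.cons _ (by simpa using List.perm_middle (l₁ := A ++ B) (l₂ := [])))
    simpa using Multiset.coe_eq_coe.2 hperm
  · refine hAc.append (.cons (hBc.append (.singleton _) ?_) ?_) ?_
    · simpa [List.getLast?_eq_some_getLast hB0] using (hBcl hB0).trans (hBv hB0)
    · simpa [List.head?_append, List.head?_eq_some_head hB0] using (hBv hB0).symm
    · simp [List.getLast?_eq_some_getLast hA0, hAu hA0]
  · simpa [List.head_append_of_ne_nil hA0] using (hAu hA0).symm.trans (hAcl hA0)

theorem euler_tour_link_general
    {V : Type*} [Fintype V] [DecidableEq V] (G : SimpleGraph V)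
    [DecidableRel G.Adj] [DecidableRel G.Reachable]
    (u v : V) (hsep : ¬ G.Reachable u v)
    (G' : SimpleGraph V) [DecidableRel G'.Adj] [DecidableRel G'.Reachable]
    (hG' : G' = G ⊔ SimpleGraph.fromEdgeSet {s(u, v)})
    (A B : List (V × V))
    (hA : IsEulerTour (componentArcs G u) A)
    (hB : IsEulerTour (componentArcs G v) B)
    (hAu : ∀ h : A ≠ [], (A.getLast h).2 = u)
    (hBv : ∀ h : B ≠ [], (B.head h).1 = v) :
    IsEulerTour (componentArcs G' u) (A ++ (u, v) :: (B ++ [(v, u)])) := by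
  rw [← edge] at hG'
  subst hG'
  rw [componentArcs_sup_edge hsep]
  exact hA.link hB hAu hBv

/-- Linking two Euler tour trees. Let `F` be a forest and `{u,v}` an edge
with `u`, `v` in different trees. Given Euler tours `A` (of `u`'s transformed component,
rotated/split so that it ends at `u`) and `B` (of `v`'s transformed component, rotated
to start at `v`), the concatenation `A ++ [(u,v)] ++ B ++ [(v,u)]` is an Euler tour of
the transformed component of `F + {u,v}` containing `u` and `v`. -/
theorem euler_tour_link
    {V : Type*} [Fintype V] [DecidableEq V] (G : SimpleGraph V)
    [DecidableRel G.Adj] [DecidableRel G.Reachable] (hF : G.IsAcyclic)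
    (u v : V) (hne : u ≠ v) (hsep : ¬ G.Reachable u v)
    (G' : SimpleGraph V) [DecidableRel G'.Adj] [DecidableRel G'.Reachable]
    (hG' : G' = G ⊔ SimpleGraph.fromEdgeSet {s(u, v)})
    (A B : List (V × V))
    (hA : IsEulerTour (componentArcs G u) A)
    (hB : IsEulerTour (componentArcs G v) B)
    (hAu : ∀ h : A ≠ [], (A.getLast h).2 = u)
    (hBv : ∀ h : B ≠ [], (B.head h).1 = v) :
    IsEulerTour (componentArcs G' u) (A ++ (u, v) :: (B ++ [(v, u)])) :=
  euler_tour_link_general G u v hsep G' hG' A B hA hB hAu hBv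
end

section
/- In the batch cut algorithm, define for each marked arc e = (u,v) a pointer to next(e) = right-neighbor of twin(e) in the Euler tour if that arc is also marked, else null. Then the directed graph induced by these pointers on the marked arcs is a union of simple paths (contains no cycle), because following twin-then-right repeatedly from any arc (u,v) eventually reaches the loop arc (u,u), which is never marked. -/
/-!
The pointer of an arc `e` is the cyclic successor `cyclicNext (twin e)` of its twin in the
tour. In a forest every edge `uv` is a bridge, so once the tour leaves `u` along
`(u, v)` it can only come back to `u` through `(v, u)`: the twin occurs, cyclically after
`(u, v)`, before every other arc out of `u`, in particular before the loop `(u, u)`. The arc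
right after the twin starts at `u` again and is strictly closer to `(u, u)` along the tour, so
following pointers from `(u, v)` reaches the loop `(u, u)`, which is never marked.
-/

namespace List

variable {α : Type*} [BEq α] {l : List α} {x y : α}

def cyclicNext (l : List α) (x : α) : α :=
  l.getD ((l.idxOf x + 1) % l.length) x

def cyclicDist (l : List α) (x y : α) : ℕ :=
  (l.idxOf y + l.length - l.idxOf x) % l.length

theorem cyclicNext_eq_getElem (hl : l ≠ []) (x : α) :
    l.cyclicNext x = l[(l.idxOf x + 1) % l.length]'(Nat.mod_lt _ (length_pos_iff.mpr hl)) :=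
  getD_eq_getElem _ _ _

@[simp]
theorem cyclicDist_self (l : List α) (x : α) : l.cyclicDist x x = 0 := by
  simp [cyclicDist]

theorem cyclicNext_mem (hl : l ≠ []) (x : α) : l.cyclicNext x ∈ l := by
  rw [cyclicNext_eq_getElem hl]
  exact getElem_mem _

theorem iterate_cyclicNext_mem (hl : l ≠ []) (hx : x ∈ l) (k : ℕ) :
    l.cyclicNext^[k] x ∈ l := by
  cases k with
  | zero => exact hx
  | succ k => rw [Function.iterate_succ_apply']; exact cyclicNext_mem hl _

variable [LawfulBEq α]

theorem iterate_cyclicNext (hnd : l.Nodup) (hx : x ∈ l) (k : ℕ) :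
    l.cyclicNext^[k] x = l[(l.idxOf x + k) % l.length]'(Nat.mod_lt _ (length_pos_of_mem hx)) := by
  have hl : l ≠ [] := ne_nil_of_mem hx
  induction k with
  | zero =>
    simp only [Function.iterate_zero_apply, Nat.add_zero,
      Nat.mod_eq_of_lt (idxOf_lt_length_iff.mpr hx), getElem_idxOf]
  | succ k ih =>
    rw [Function.iterate_succ_apply', ih, cyclicNext_eq_getElem hl]
    simp only [hnd.idxOf_getElem, Nat.mod_add_mod, Nat.add_assoc]

theorem cyclicDist_iterate_cyclicNext (hnd : l.Nodup) (hx : x ∈ l) (k : ℕ) :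
    l.cyclicDist x (l.cyclicNext^[k] x) = k % l.length := by
  have hp := idxOf_lt_length_iff.mpr hx
  rw [cyclicDist, iterate_cyclicNext hnd hx, hnd.idxOf_getElem,
    Nat.add_sub_assoc hp.le, Nat.mod_add_mod,
    show l.idxOf x + k + (l.length - l.idxOf x) = k + l.length by omega, Nat.add_mod_right]

theorem iterate_cyclicDist (hnd : l.Nodup) (hx : x ∈ l) (hy : y ∈ l) :
    l.cyclicNext^[l.cyclicDist x y] x = y := by
  have hp := idxOf_lt_length_iff.mpr hx
  have hq := idxOf_lt_length_iff.mpr hy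
  simp only [iterate_cyclicNext hnd hx, cyclicDist, Nat.add_mod_mod]
  simp only [Nat.add_sub_cancel' (by omega : l.idxOf x ≤ l.idxOf y + l.length),
    Nat.add_mod_right, Nat.mod_eq_of_lt hq, getElem_idxOf]

end List

/-- The pointer `next(e)` of the batch cut algorithm, written exactly as in the statement; the
default `a` of `getD` is only reached on the empty list. -/
def twinNext {V : Type*} [BEq V] (l : List (V × V)) (a : V × V) : V × V :=
  l.getD ((l.idxOf a.swap + 1) % l.length) a

theorem twinNext_eq_cyclicNext_swap {V : Type*} [BEq V] {l : List (V × V)} (hl : l ≠ [])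
    (a : V × V) : twinNext l a = l.cyclicNext a.swap :=
  have hi := Nat.mod_lt (l.idxOf a.swap + 1) (List.length_pos_iff.mpr hl)
  (List.getD_eq_getElem _ _ hi).trans (List.getD_eq_getElem _ _ hi).symm

theorem twinNext_mem {V : Type*} [BEq V] {l : List (V × V)} (hl : l ≠ []) (a : V × V) :
    twinNext l a ∈ l :=
  twinNext_eq_cyclicNext_swap hl a ▸ l.cyclicNext_mem hl _

namespace IsEulerTour

variable {V : Type*} [BEq V] [LawfulBEq V] {arcs : Multiset (V × V)} {l : List (V × V)}
  {x : V × V}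

theorem fst_cyclicNext (hl : IsEulerTour arcs l) (hx : x ∈ l) : (l.cyclicNext x).1 = x.2 := by
  obtain ⟨hne, -, hchain, hclosed⟩ := hl
  have hi := List.idxOf_lt_length_iff.mpr hx
  conv_rhs => rw [← List.getElem_idxOf hi]
  rw [List.cyclicNext_eq_getElem hne]
  rcases Nat.lt_or_ge (l.idxOf x + 1) l.length with hlt | hge
  · simp only [Nat.mod_eq_of_lt hlt]
    exact (List.isChain_iff_getElem.mp hchain _ hlt).symm
  · have hlast : l.idxOf x = l.length - 1 := by omega
    simp only [hlast, Nat.sub_add_cancel (List.length_pos_iff.mpr hne), Nat.mod_self]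
    rw [← List.getLast_eq_getElem hne, hclosed hne, List.head_eq_getElem_zero]

theorem fst_twinNext (hl : IsEulerTour arcs l) {a : V × V} (ha : a.swap ∈ l) :
    (twinNext l a).1 = a.1 := by
  rw [twinNext_eq_cyclicNext_swap hl.1, hl.fst_cyclicNext ha, Prod.snd_swap]

theorem reachable_iterate_cyclicNext (hl : IsEulerTour arcs l) (hx : x ∈ l)
    {H : SimpleGraph V} {k : ℕ} (hk : 0 < k)
    (harcs : ∀ j, 0 < j → j < k →
      H.Adj (l.cyclicNext^[j] x).1 (l.cyclicNext^[j] x).2 ∨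
        (l.cyclicNext^[j] x).1 = (l.cyclicNext^[j] x).2) :
    H.Reachable x.2 (l.cyclicNext^[k] x).1 := by
  induction k with
  | zero => omega
  | succ k ih =>
    have hmem := l.iterate_cyclicNext_mem hl.1 hx k
    rw [Function.iterate_succ_apply', hl.fst_cyclicNext hmem]
    rcases Nat.eq_zero_or_pos k with rfl | hk
    · rfl
    · refine (ih hk fun j hj hjk => harcs j hj (by omega)).trans ?_
      rcases harcs k hk (by omega) with hadj | hloop
      · exact hadj.reachable
      · rw [hloop]

end IsEulerTour

section ComponentTour

variable {V : Type*} [Fintype V] [DecidableEq V] {G : SimpleGraph V} [DecidableRel G.Adj]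
  [DecidableRel G.Reachable] {w : V} {l : List (V × V)} {a b : V × V}

theorem mem_componentArcs :
    a ∈ componentArcs G w ↔ (G.Adj a.1 a.2 ∨ a.2 = a.1) ∧ G.Reachable w a.1 := by
  simp only [componentArcs, treeArcs, Multiset.mem_filter, Multiset.mem_add, Finset.mem_val,
    Finset.mem_filter, Finset.mem_univ, true_and, Multiset.mem_map, Prod.ext_iff]
  constructor
  · rintro ⟨hadj | ⟨v, h1, h2⟩, hr⟩
    · exact ⟨.inl hadj, hr⟩
    · exact ⟨.inr (h2.symm.trans h1), hr⟩
  · rintro ⟨hadj | hloop, hr⟩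
    · exact ⟨.inl hadj, hr⟩
    · exact ⟨.inr ⟨a.1, rfl, hloop.symm⟩, hr⟩

theorem nodup_componentArcs : (componentArcs G w).Nodup := by
  refine Multiset.Nodup.filter _ (Multiset.nodup_add.mpr ⟨Finset.nodup _,
    Finset.univ.nodup.map fun _ _ h => congrArg Prod.fst h, ?_⟩)
  rw [Multiset.disjoint_left]
  rintro a ha hloop
  obtain ⟨v, -, rfl⟩ := Multiset.mem_map.mp hloop
  exact G.loopless.irrefl v (Finset.mem_filter.mp ha).2

namespace IsEulerTour

theorem mem_iff (hl : IsEulerTour (componentArcs G w) l) :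
    a ∈ l ↔ (G.Adj a.1 a.2 ∨ a.2 = a.1) ∧ G.Reachable w a.1 := by
  rw [← Multiset.mem_coe, hl.2.1, mem_componentArcs]

theorem nodup (hl : IsEulerTour (componentArcs G w) l) : l.Nodup :=
  Multiset.coe_nodup.mp (hl.2.1 ▸ nodup_componentArcs)

theorem swap_mem (hl : IsEulerTour (componentArcs G w) l) (ha : a ∈ l) (hadj : G.Adj a.1 a.2) :
    a.swap ∈ l :=
  hl.mem_iff.mpr ⟨.inl hadj.symm, (hl.mem_iff.mp ha).2.trans hadj.reachable⟩

theorem loop_mem (hl : IsEulerTour (componentArcs G w) l) (ha : a ∈ l) : (a.1, a.1) ∈ l :=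
  hl.mem_iff.mpr ⟨.inr rfl, (hl.mem_iff.mp ha).2⟩

theorem cyclicDist_swap_lt_of_isBridge (hl : IsEulerTour (componentArcs G w) l)
    (hadj : G.Adj a.1 a.2) (hbr : G.IsBridge s(a.1, a.2)) (ha : a ∈ l) (hb : b ∈ l)
    (hb1 : b.1 = a.1) (hba : b ≠ a) :
    l.cyclicDist a a.swap < l.cyclicDist a b := by
  have hnd := hl.nodup
  have hswap := hl.swap_mem ha hadj
  have hdn : l.cyclicDist a b < l.length := Nat.mod_lt _ (List.length_pos_of_mem ha)
  have hd0 : 0 < l.cyclicDist a b := Nat.pos_of_ne_zero fun h => hba <| by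
    rw [← List.iterate_cyclicDist hnd ha hb, h, Function.iterate_zero_apply]
  by_contra! hle
  have hlt : l.cyclicDist a b < l.cyclicDist a a.swap := hle.lt_of_ne fun h => hadj.ne <| by
    rw [← hb1, ← List.iterate_cyclicDist hnd ha hb, h, List.iterate_cyclicDist hnd ha hswap,
      Prod.fst_swap]
  refine SimpleGraph.isBridge_iff.mp hbr (SimpleGraph.Reachable.symm ?_)
  have hwalk := hl.reachable_iterate_cyclicNext ha hd0
    (H := G.deleteEdges {s(a.1, a.2)}) fun j hj hjd => ?_
  · rwa [List.iterate_cyclicDist hnd ha hb, hb1] at hwalk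
  rcases (hl.mem_iff.mp (l.iterate_cyclicNext_mem hl.1 ha j)).1 with hadj' | hloop
  · refine .inl (SimpleGraph.deleteEdges_adj.mpr ⟨hadj', fun hedge => ?_⟩)
    have hdist := List.cyclicDist_iterate_cyclicNext hnd ha j
    rw [Nat.mod_eq_of_lt (by omega)] at hdist
    rcases Sym2.eq_iff.mp (Set.mem_singleton_iff.mp hedge) with ⟨h1, h2⟩ | ⟨h1, h2⟩
    · rw [show l.cyclicNext^[j] a = a from Prod.ext h1 h2, List.cyclicDist_self] at hdist
      omega
    · rw [show l.cyclicNext^[j] a = a.swap from Prod.ext h1 h2] at hdist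
      omega
  · exact .inr hloop.symm

theorem cyclicDist_twinNext_loop_lt (hl : IsEulerTour (componentArcs G w) l)
    (hF : G.IsAcyclic) (ha : a ∈ l) (hadj : G.Adj a.1 a.2) :
    l.cyclicDist (twinNext l a) (a.1, a.1) < l.cyclicDist a (a.1, a.1) := by
  have hnd := hl.nodup
  have hlt := hl.cyclicDist_swap_lt_of_isBridge hadj
    (SimpleGraph.isAcyclic_iff_forall_adj_isBridge.mp hF hadj) ha (hl.loop_mem ha) rfl
    fun h => hadj.ne (congrArg Prod.snd h)
  have hnext : twinNext l a = l.cyclicNext^[l.cyclicDist a a.swap + 1] a := by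
    rw [twinNext_eq_cyclicNext_swap hl.1, Function.iterate_succ_apply',
      List.iterate_cyclicDist hnd ha (hl.swap_mem ha hadj)]
  have hloop : (a.1, a.1) = l.cyclicNext^[l.cyclicDist a (a.1, a.1) -
      (l.cyclicDist a a.swap + 1)] (twinNext l a) := by
    rw [hnext, ← Function.iterate_add_apply, Nat.sub_add_cancel hlt,
      List.iterate_cyclicDist hnd ha (hl.loop_mem ha)]
  calc l.cyclicDist (twinNext l a) (a.1, a.1)
      = (l.cyclicDist a (a.1, a.1) - (l.cyclicDist a a.swap + 1)) % l.length := by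
        conv_lhs => rw [hloop]
        exact List.cyclicDist_iterate_cyclicNext hnd (twinNext_mem hl.1 a) _
    _ ≤ l.cyclicDist a (a.1, a.1) - (l.cyclicDist a a.swap + 1) := Nat.mod_le _ _
    _ < l.cyclicDist a (a.1, a.1) := by omega

theorem exists_iterate_twinNext_eq_loop (hl : IsEulerTour (componentArcs G w) l)
    (hF : G.IsAcyclic) (ha : a ∈ l) : ∃ k, (twinNext l)^[k] a = (a.1, a.1) := by
  induction hd : l.cyclicDist a (a.1, a.1) using Nat.strong_induction_on generalizing a with
  | _ d ih =>
    by_cases hloop : a.2 = a.1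
    · exact ⟨0, Prod.ext rfl hloop⟩
    have hadj : G.Adj a.1 a.2 := (hl.mem_iff.mp ha).1.resolve_right hloop
    have hfst := hl.fst_twinNext (hl.swap_mem ha hadj)
    have hlt := hl.cyclicDist_twinNext_loop_lt hF ha hadj
    obtain ⟨k, hk⟩ := ih _ (hd ▸ hlt) (twinNext_mem hl.1 a) (by rw [hfst])
    exact ⟨k + 1, by rw [Function.iterate_succ_apply, hk, hfst]⟩

end IsEulerTour

end ComponentTour

/-- In the batch cut algorithm, let `l` be an Euler tour (cyclic list) of
the transformed component of a forest, and `M` a set of marked non-loop arcs of the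
tour. The "next" pointer of an arc `e` is the right neighbor of `twin e = (e.2, e.1)`
in the cyclic tour. Then following next pointers from any marked arc `(u,v)` eventually
reaches the loop `(u,u)`, which is never marked; hence the pointer graph on the marked
arcs contains no cycle (it is a union of simple paths). -/
theorem batch_cut_next_pointers_acyclic
    {V : Type*} [Fintype V] [DecidableEq V] (G : SimpleGraph V)
    [DecidableRel G.Adj] [DecidableRel G.Reachable] (hF : G.IsAcyclic)
    (w : V) (l : List (V × V)) (hl : IsEulerTour (componentArcs G w) l)
    (M : Set (V × V)) (hM : ∀ a ∈ M, a ∈ l) (hloop : ∀ x : V, (x, x) ∉ M) :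
    ∀ e ∈ M,
      (∃ k : ℕ,
        (fun a : V × V => l.getD ((l.idxOf (a.2, a.1) + 1) % l.length) a)^[k] e
          = (e.1, e.1)) ∧
      (∃ k : ℕ,
        (fun a : V × V => l.getD ((l.idxOf (a.2, a.1) + 1) % l.length) a)^[k] e
          ∉ M) := by
  intro e he
  obtain ⟨k, hk⟩ := hl.exists_iterate_twinNext_eq_loop hF (hM e he)
  exact ⟨⟨k, hk⟩, ⟨k, hk ▸ hloop e.1⟩⟩
end
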